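/- Bound-based pruning is sound: with ρ_C(u) = Σ_{v ∈ N_C(u)} tppr(v) and lower bounds t̂(v) ≤ tppr(v) ≤ t̂(v) + R for all v simultaneously via Σ_{v∈N_C(u)} tppr(v) ≤ Σ_{v∈N_C(u)} t̂(v) + R (R = total residue), if R + Σ_{w ∈ N_V(v)} t̂(w) < β̂ for some threshold β̂, then for every subset S ⊆ V containing v, min_{u ∈ S} ρ_S(u) < β̂. Hence v cannot belong to any set whose minimum query-biased degree is at least β̂. -/

import Mathlib

open Finset

/-- Query-biased temporal degree: sum of `tppr` over neighbors of `u` inside `S`. -/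
def qbd {V : Type*} [DecidableEq V] (G : SimpleGraph V) [DecidableRel G.Adj]
    (tppr : V → ℝ) (S : Finset V) (u : V) : ℝ :=
  ∑ v ∈ S.filter (fun v => G.Adj u v), tppr v

lemma qbd_le_add_sum_neighbors {V : Type*} [Fintype V] [DecidableEq V]
    (G : SimpleGraph V) [DecidableRel G.Adj] {tppr that : V → ℝ} (hthat : ∀ v, 0 ≤ that v)
    {R : ℝ} {S : Finset V} {u : V}
    (hupper : qbd G tppr S u ≤ (∑ v ∈ S.filter (fun v => G.Adj u v), that v) + R) :
    qbd G tppr S u ≤ R + ∑ w ∈ univ.filter (fun w => G.Adj u w), that w := by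
  have hmono : ∑ w ∈ S.filter (fun w => G.Adj u w), that w
      ≤ ∑ w ∈ univ.filter (fun w => G.Adj u w), that w :=
    sum_le_sum_of_subset_of_nonneg (filter_subset_filter _ (subset_univ S))
      fun w _ _ => hthat w
  linarith

theorem stmt_10_general {V : Type*} [Fintype V] [DecidableEq V]
    (G : SimpleGraph V) [DecidableRel G.Adj]
    (tppr that : V → ℝ) (hthat : ∀ v, 0 ≤ that v)
    (R : ℝ)
    (hbound : ∀ (u : V) (S : Finset V),
      (∑ v ∈ S.filter (fun v => G.Adj u v), that v) ≤ qbd G tppr S u ∧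
      qbd G tppr S u ≤ (∑ v ∈ S.filter (fun v => G.Adj u v), that v) + R)
    (βhat : ℝ) (v : V)
    (hprune : R + ∑ w ∈ Finset.univ.filter (fun w => G.Adj v w), that w < βhat) :
    ∀ S : Finset V, ∀ hv : v ∈ S,
      S.inf' ⟨v, hv⟩ (qbd G tppr S) < βhat := by
  intro S hv
  calc S.inf' ⟨v, hv⟩ (qbd G tppr S)
      ≤ qbd G tppr S v := inf'_le _ hv
    _ ≤ R + ∑ w ∈ univ.filter (fun w => G.Adj v w), that w :=
      qbd_le_add_sum_neighbors G hthat (hbound v S).2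
    _ < βhat := hprune

theorem stmt_10 {V : Type*} [Fintype V] [DecidableEq V]
    (G : SimpleGraph V) [DecidableRel G.Adj]
    (tppr that : V → ℝ) (htppr : ∀ v, 0 ≤ tppr v) (hthat : ∀ v, 0 ≤ that v)
    (R : ℝ) (hR : 0 ≤ R)
    (hbound : ∀ (u : V) (S : Finset V),
      (∑ v ∈ S.filter (fun v => G.Adj u v), that v) ≤ qbd G tppr S u ∧
      qbd G tppr S u ≤ (∑ v ∈ S.filter (fun v => G.Adj u v), that v) + R)
    (βhat : ℝ) (hβ : 0 ≤ βhat) (v : V)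
    (hprune : R + ∑ w ∈ Finset.univ.filter (fun w => G.Adj v w), that w < βhat) :
    ∀ S : Finset V, ∀ hv : v ∈ S,
      S.inf' ⟨v, hv⟩ (qbd G tppr S) < βhat :=
  stmt_10_general G tppr that hthat R hbound βhat v hprune
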